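/- If R ≤ 0.2 then √π R e^{R²/4} ≤ 1/2, and consequently for R ≤ 0.2 the function φ ↦ |C(R,∞,φ)| is strictly decreasing on (0, π/2]; in particular |C(R,∞,φ)| ≤ |C(R,∞,0)| = 2 e^{-R²/4} for all φ ∈ [0,π/2]. -/

import Mathlib

/-!
Differentiating in `φ`,
`∂_φ |C(R,∞,φ)| = -2 sin φ e^{-R²/4}
  + √π R sin φ cos φ (1 - erf(R cos φ / 2)) e^{-R² sin²φ/4} (2 - R² sin²φ / 2)
  + R² sin³φ e^{-R²/4}`.
Dropping `erf ≥ 0` and the Gaussian factor in the middle term and using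
`cos φ ≤ 1 - sin²φ / 2`, the last term is absorbed as soon as `R ≤ √π`, which leaves
`∂_φ |C(R,∞,φ)| ≤ 2 e^{-R²/4} sin φ (-1 + √π R e^{R²/4})`.
For `R ≤ 0.2` the bracket is at most `-1/2`, so the area strictly decreases on `[0, π/2]`.
-/

open MeasureTheory Real

/-- The error function `erf(x) = (2/√π) ∫_0^x e^{-y²} dy`. -/
noncomputable def erf (x : ℝ) : ℝ :=
  (2 / Real.sqrt π) * ∫ y in (0 : ℝ)..x, Real.exp (-y ^ 2)

/-- `I(R,φ) = √π R sin²φ (1 - erf((R/2)cos φ)) e^{-R² sin²φ/4}`. -/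
noncomputable def Ifun (R φ : ℝ) : ℝ :=
  Real.sqrt π * R * Real.sin φ ^ 2 * (1 - erf (R / 2 * Real.cos φ)) *
    Real.exp (-(R ^ 2 * Real.sin φ ^ 2) / 4)

theorem hasDerivAt_erf (x : ℝ) : HasDerivAt erf (2 / √π * exp (-x ^ 2)) x := by
  have hc : Continuous fun y : ℝ => exp (-y ^ 2) := by fun_prop
  exact (intervalIntegral.integral_hasDerivAt_right (hc.intervalIntegrable 0 x)
    (hc.stronglyMeasurableAtFilter _ _) hc.continuousAt).const_mul _

theorem erf_nonneg {x : ℝ} (hx : 0 ≤ x) : 0 ≤ erf x :=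
  mul_nonneg (by positivity) (intervalIntegral.integral_nonneg hx fun y _ => (exp_pos _).le)

/-- The paper's `|C(R,∞,φ)|`, the Gaussian area of the infinite doubled cone. -/
noncomputable def gaussianConeArea (R φ : ℝ) : ℝ :=
  2 * cos φ * exp (-R ^ 2 / 4) + Ifun R φ

theorem gaussianConeArea_zero (R : ℝ) : gaussianConeArea R 0 = 2 * exp (-R ^ 2 / 4) := by
  simp [gaussianConeArea, Ifun]

theorem hasDerivAt_Ifun (R φ : ℝ) :
    HasDerivAt (Ifun R)
      (√π * R * sin φ * cos φ * (1 - erf (R / 2 * cos φ)) * exp (-(R ^ 2 * sin φ ^ 2) / 4) *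
          (2 - R ^ 2 * sin φ ^ 2 / 2) +
        R ^ 2 * sin φ ^ 3 * exp (-R ^ 2 / 4)) φ := by
  have hsin_sq : HasDerivAt (fun φ => sin φ ^ 2) (2 * sin φ * cos φ) φ := by
    refine ((hasDerivAt_sin φ).fun_pow 2).congr_deriv ?_
    push_cast
    ring
  have herf : HasDerivAt (fun φ => 1 - erf (R / 2 * cos φ))
      (R * sin φ / √π * exp (-(R / 2 * cos φ) ^ 2)) φ := by
    refine (((hasDerivAt_erf _).comp φ ((hasDerivAt_cos φ).const_mul (R / 2))).const_sub 1
      ).congr_deriv ?_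
    ring
  have hgauss := ((hsin_sq.const_mul (R ^ 2)).fun_neg.div_const 4).exp
  have hexp : exp (-(R / 2 * cos φ) ^ 2) * exp (-(R ^ 2 * sin φ ^ 2) / 4) = exp (-R ^ 2 / 4) := by
    rw [← exp_add]
    congr 1
    linear_combination (-R ^ 2 / 4) * cos_sq_add_sin_sq φ
  have hπ : √π ≠ 0 := (sqrt_pos.2 pi_pos).ne'
  refine (((hsin_sq.const_mul (√π * R)).fun_mul herf).fun_mul hgauss).congr_deriv ?_
  rw [← hexp]
  field_simp
  ring

theorem hasDerivAt_gaussianConeArea (R φ : ℝ) :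
    HasDerivAt (gaussianConeArea R)
      (-(2 * sin φ * exp (-R ^ 2 / 4)) +
        √π * R * sin φ * cos φ * (1 - erf (R / 2 * cos φ)) * exp (-(R ^ 2 * sin φ ^ 2) / 4) *
          (2 - R ^ 2 * sin φ ^ 2 / 2) +
        R ^ 2 * sin φ ^ 3 * exp (-R ^ 2 / 4)) φ := by
  refine ((((hasDerivAt_cos φ).const_mul 2).mul_const (exp (-R ^ 2 / 4))).add
    (hasDerivAt_Ifun R φ)).congr_deriv ?_
  ring

theorem deriv_gaussianConeArea_le {R φ : ℝ} (hR0 : 0 ≤ R) (hR : R ≤ √π)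
    (hφ : φ ∈ Set.Icc 0 (π / 2)) :
    deriv (gaussianConeArea R) φ ≤
      2 * exp (-R ^ 2 / 4) * sin φ * (-1 + √π * R * exp (R ^ 2 / 4)) := by
  rw [(hasDerivAt_gaussianConeArea R φ).deriv]
  have hs : 0 ≤ sin φ := sin_nonneg_of_nonneg_of_le_pi hφ.1 (by linarith [hφ.2, pi_pos])
  have hc : 0 ≤ cos φ := cos_nonneg_of_mem_Icc ⟨by linarith [hφ.1, pi_pos], hφ.2⟩
  have hcos : 2 * cos φ ≤ 2 - sin φ ^ 2 := by
    nlinarith [sin_sq_add_cos_sq φ, sq_nonneg (1 - cos φ)]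
  have hRs : R ^ 2 * sin φ ^ 2 ≤ π := by
    have := mul_le_mul (pow_le_pow_left₀ hR0 hR 2) (sin_sq_le_one φ) (sq_nonneg _) (sq_nonneg _)
    rwa [sq_sqrt pi_pos.le, mul_one] at this
  have hK : 0 ≤ 2 - R ^ 2 * sin φ ^ 2 / 2 := by linarith [pi_lt_four]
  have hK₂ : 2 - R ^ 2 * sin φ ^ 2 / 2 ≤ 2 := by nlinarith [sq_nonneg (R * sin φ)]
  set E := exp (-R ^ 2 / 4)
  set E₁ := exp (-(R ^ 2 * sin φ ^ 2) / 4)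
  set K := 2 - R ^ 2 * sin φ ^ 2 / 2
  have hE : E ≤ 1 := exp_le_one_iff.2 (by nlinarith)
  have hE₁ : E₁ ≤ 1 := exp_le_one_iff.2 (by nlinarith [sq_nonneg (R * sin φ)])
  have herf : 0 ≤ erf (R / 2 * cos φ) := erf_nonneg (by positivity)
  have hfactor : (1 - erf (R / 2 * cos φ)) * E₁ * K ≤ 2 := by
    have hE₁K : E₁ * K ≤ 1 * 2 := mul_le_mul hE₁ hK₂ hK zero_le_one
    nlinarith [mul_nonneg (exp_pos (-(R ^ 2 * sin φ ^ 2) / 4)).le hK]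
  have hmiddle : √π * R * sin φ * cos φ * (1 - erf (R / 2 * cos φ)) * E₁ * K ≤
      √π * R * sin φ * (2 - sin φ ^ 2) := by
    calc _ = √π * R * sin φ * (cos φ * ((1 - erf (R / 2 * cos φ)) * E₁ * K)) := by ring
      _ ≤ √π * R * sin φ * (cos φ * 2) := by gcongr
      _ ≤ _ := by gcongr; linarith
  have hlast : R ^ 2 * sin φ ^ 3 * E ≤ √π * R * sin φ * sin φ ^ 2 := by
    calc R ^ 2 * sin φ ^ 3 * E ≤ R ^ 2 * sin φ ^ 3 := by
          exact mul_le_of_le_one_right (by positivity) hE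
      _ = R * R * sin φ * sin φ ^ 2 := by ring
      _ ≤ √π * R * sin φ * sin φ ^ 2 := by gcongr
  have hEinv : E * exp (R ^ 2 / 4) = 1 := by rw [← exp_add]; ring_nf; exact exp_zero
  linear_combination hmiddle + hlast - 2 * √π * R * sin φ * hEinv

theorem sqrt_pi_mul_mul_exp_le_half {R : ℝ} (hR0 : 0 ≤ R) (hR : R ≤ 0.2) :
    √π * R * exp (R ^ 2 / 4) ≤ 1 / 2 := by
  have hsqrt_pi : √π < 1.7725 := (sqrt_lt' (by norm_num)).2 (by linarith [pi_lt_d6])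
  have hexp : exp (R ^ 2 / 4) ≤ 1 / (1 - 0.01) :=
    (exp_le_exp.2 (by nlinarith)).trans
      (exp_bound_div_one_sub_of_interval (by norm_num) (by norm_num))
  calc √π * R * exp (R ^ 2 / 4) ≤ 1.7725 * 0.2 * (1 / (1 - 0.01)) := by gcongr
    _ ≤ 1 / 2 := by norm_num

theorem strictAntiOn_gaussianConeArea {R : ℝ} (hR0 : 0 ≤ R)
    (hR : √π * R * exp (R ^ 2 / 4) < 1) :
    StrictAntiOn (gaussianConeArea R) (Set.Icc 0 (π / 2)) := by
  have hR_le : R ≤ √π := by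
    have hsqrt_pi : 1 ≤ √π := one_le_sqrt.2 (by linarith [pi_gt_three])
    have : √π * R ≤ √π * R * exp (R ^ 2 / 4) :=
      le_mul_of_one_le_right (by positivity) (one_le_exp (by positivity))
    nlinarith
  refine strictAntiOn_of_deriv_neg (convex_Icc _ _)
    (fun φ _ => (hasDerivAt_gaussianConeArea R φ).continuousAt.continuousWithinAt) ?_
  intro φ hφ
  rw [interior_Icc] at hφ
  have hsin : 0 < sin φ := sin_pos_of_pos_of_lt_pi hφ.1 (by linarith [hφ.2, pi_pos])
  calc deriv (gaussianConeArea R) φ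
      ≤ 2 * exp (-R ^ 2 / 4) * sin φ * (-1 + √π * R * exp (R ^ 2 / 4)) :=
        deriv_gaussianConeArea_le hR0 hR_le (Set.Ioo_subset_Icc_self hφ)
    _ < 0 := mul_neg_of_pos_of_neg (by positivity) (by linarith)

/-- For `R ≤ 0.2` one has `√π R e^{R²/4} ≤ 1/2`, hence the Gaussian area of the
infinite doubled cone `|C(R,∞,φ)| = 2 cos φ e^{-R²/4} + I(R,φ)` is strictly
decreasing in `φ` on `(0, π/2]`, and in particular is bounded by its value
`2 e^{-R²/4}` at `φ = 0`. -/
theorem stmt_9 (R : ℝ) (hR0 : 0 < R) (hR : R ≤ 0.2) :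
    Real.sqrt π * R * Real.exp (R ^ 2 / 4) ≤ 1 / 2 ∧
    StrictAntiOn (fun φ => 2 * Real.cos φ * Real.exp (-R ^ 2 / 4) + Ifun R φ)
      (Set.Ioc 0 (π / 2)) ∧
    ∀ φ ∈ Set.Icc 0 (π / 2),
      2 * Real.cos φ * Real.exp (-R ^ 2 / 4) + Ifun R φ ≤
        2 * Real.exp (-R ^ 2 / 4) := by
  have hsmall := sqrt_pi_mul_mul_exp_le_half hR0.le hR
  have hanti := strictAntiOn_gaussianConeArea hR0.le (by linarith)
  refine ⟨hsmall, hanti.mono Set.Ioc_subset_Icc_self, fun φ hφ => ?_⟩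
  calc gaussianConeArea R φ ≤ gaussianConeArea R 0 :=
        hanti.antitoneOn ⟨le_rfl, by positivity⟩ hφ hφ.1
    _ = 2 * exp (-R ^ 2 / 4) := gaussianConeArea_zero R
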